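/- Let A be a left noetherian ring, N a finitely generated left A-module, and {M_α}_{α∈I} a family of left A-modules of uniformly bounded injective dimension. Then for every i ≥ 0 the natural map ⊕_{α∈I} Ext^i_A(N, M_α) → Ext^i_A(N, ⊕_{α∈I} M_α) is an isomorphism. -/

import Mathlib

open CategoryTheory

/-- The `i`-th Ext group of two left `A`-modules, as a type. -/
noncomputable abbrev extType (A : Type) [Ring A] (i : ℕ) (M N : ModuleCat.{0} A) : Type :=
  ((Ext ℤ (ModuleCat.{0} A) i).obj (Opposite.op M)).obj N

/-- The injective dimension of a left `A`-module, with value in `ℕ∞`,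
defined via vanishing of Ext groups. -/
noncomputable def injDim (A : Type) [Ring A] (M : ModuleCat.{0} A) : ℕ∞ :=
  sInf {n : ℕ∞ | ∀ (N : ModuleCat.{0} A) (i : ℕ), n < (i : ℕ∞) → Subsingleton (extType A i N M)}

/-! A finitely generated module `N` over a left noetherian ring has a resolution `P` by finitely
generated free modules. A class in `Ext^i(N, ⨁ M α)` is represented by a cocycle `P_i ⟶ ⨁ M α`,
and since `P_i` is finitely generated this cocycle factors through a finite subsum. Hence the
maps induced on `Ext^i(N, -)` by the inclusions and projections of the direct sum exhibit
`Ext^i(N, ⨁ M α)` as the direct sum of the `Ext^i(N, M α)`. -/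

open Opposite DirectSum

noncomputable section

namespace DirectSum

variable {I : Type*} [DecidableEq I]

theorem toAddMonoid_bijective_of_retractions {H : I → Type*} [∀ i, AddCommMonoid (H i)]
    {G : Type*} [AddCommMonoid G] (φ : ∀ i, H i →+ G) (ρ : ∀ i, G →+ H i)
    (hρφ : ∀ i x, ρ i (φ i x) = x)
    (hρφ_of_ne : ∀ i j, i ≠ j → ∀ x, ρ j (φ i x) = 0)
    (hsum : ∀ g, ∃ s : Finset I, ∑ i ∈ s, φ i (ρ i g) = g) :
    Function.Bijective (toAddMonoid φ) := by
  have hρ : ∀ j x, ρ j (toAddMonoid φ x) = x j := by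
    intro j x
    induction x using DirectSum.induction_on with
    | zero => simp
    | of i y =>
      rw [toAddMonoid_of]
      by_cases hij : i = j
      · subst hij; rw [hρφ, of_eq_same]
      · rw [hρφ_of_ne i j hij, of_eq_of_ne _ _ _ (Ne.symm hij)]
    | add x y hx hy => rw [map_add, map_add, hx, hy, add_apply]
  refine ⟨fun x y hxy => DFinsupp.ext fun j => by rw [← hρ, ← hρ, hxy], fun g => ?_⟩
  obtain ⟨s, hs⟩ := hsum g
  exact ⟨∑ i ∈ s, of H i (ρ i g), by simp [hs]⟩

theorem sum_of_apply_eq_self {M : I → Type*} [∀ i, AddCommMonoid (M i)] (x : ⨁ i, M i)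
    {s : Finset I} (hs : ∀ i ∉ s, x i = 0) : ∑ i ∈ s, of M i (x i) = x := by
  ext j
  rw [DFinsupp.finsetSum_apply, Finset.sum_eq_single j (fun i _ hij => of_eq_of_ne _ _ _ hij.symm)
    (fun hj => by rw [hs j hj, map_zero, zero_apply]), of_eq_same]

theorem exists_finset_sum_lof_component_comp {A : Type*} [Semiring A] {M : I → Type*}
    [∀ i, AddCommMonoid (M i)] [∀ i, Module A (M i)] {F : Type*} [AddCommMonoid F] [Module A F]
    [Module.Finite A F] (f : F →ₗ[A] ⨁ i, M i) :
    ∃ s : Finset I, (∑ i ∈ s, lof A I M i ∘ₗ component A I M i) ∘ₗ f = f := by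
  classical
  obtain ⟨t, ht⟩ := Module.Finite.fg_top (R := A) (M := F)
  refine ⟨t.biUnion fun y => (f y).support, LinearMap.ext_on ht fun y hy => ?_⟩
  rw [LinearMap.comp_apply, LinearMap.sum_apply]
  simp only [LinearMap.comp_apply, lof_eq_of, ← apply_eq_component]
  exact sum_of_apply_eq_self _ fun i hi => DFinsupp.notMem_support_iff.1 fun hmem =>
    hi (Finset.mem_biUnion.2 ⟨y, hy, hmem⟩)

end DirectSum

namespace CategoryTheory.Functor

universe v w

variable {A R : Type*} [Ring A] [Ring R] {I : Type v} [DecidableEq I] (M : I → ModuleCat.{v} A)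

theorem toAddMonoid_map_lof_bijective (F : ModuleCat.{v} A ⥤ ModuleCat.{w} R) [F.Additive]
    (hF : ∀ x : F.obj (.of A (⨁ i, M i)), ∃ s : Finset I,
      F.map (ModuleCat.ofHom (∑ i ∈ s, lof A I (M ·) i ∘ₗ component A I (M ·) i)) x = x) :
    Function.Bijective (toAddMonoid fun i =>
      (F.map (ModuleCat.ofHom (lof A I (M ·) i))).hom.toAddMonoidHom) := by
  have hcomp : ∀ i j x, (F.map (ModuleCat.ofHom (component A I (M ·) j)))
      (F.map (ModuleCat.ofHom (lof A I (M ·) i)) x) =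
        F.map (ModuleCat.ofHom (component A I (M ·) j ∘ₗ lof A I (M ·) i)) x := by
    intro i j x
    rw [ModuleCat.ofHom_comp, F.map_comp, ConcreteCategory.comp_apply]
  refine toAddMonoid_bijective_of_retractions _
    (fun i => (F.map (ModuleCat.ofHom (component A I (M ·) i))).hom.toAddMonoidHom)
    (fun i x => ?_) (fun i j hij x => ?_) (fun x => ?_)
  · change (F.map _) (F.map _ x) = x
    rw [hcomp, component_comp_lof_same, ModuleCat.ofHom_id, F.map_id, ModuleCat.id_apply]
  · change (F.map _) (F.map _ x) = 0
    rw [hcomp, component_comp_lof, dif_neg hij, ModuleCat.ofHom_zero, F.map_zero]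
    rfl
  · obtain ⟨s, hs⟩ := hF x
    refine ⟨s, ?_⟩
    conv_rhs => rw [← hs]
    have : ModuleCat.ofHom (∑ i ∈ s, lof A I (M ·) i ∘ₗ component A I (M ·) i) = ∑ i ∈ s,
        ModuleCat.ofHom (component A I (M ·) i) ≫ ModuleCat.ofHom (lof A I (M ·) i) := by
      ext1
      simp [ModuleCat.hom_sum]
    simp [this, F.map_sum, ModuleCat.hom_sum]

end CategoryTheory.Functor

namespace ModuleCat

universe u

variable {A : Type u} [Ring A]

lemma exists_span_eq_top_and_finite (X : Type*) [AddCommGroup X] [Module A X] :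
    ∃ S : Set X, Submodule.span A S = ⊤ ∧ (Module.Finite A X → S.Finite) := by
  by_cases hX : Module.Finite A X
  · obtain ⟨S, hS⟩ := hX.fg_top
    exact ⟨S, hS, fun _ => S.finite_toSet⟩
  · exact ⟨Set.univ, Submodule.span_univ, fun h => absurd h hX⟩

def generators (X : ModuleCat.{u} A) : Set X := (exists_span_eq_top_and_finite (A := A) X).choose

-- Free on a generating set that is finite as soon as `X` is finitely generated.
def freeCover (X : ModuleCat.{u} A) : ModuleCat.{u} A := of A (X.generators →₀ A)

def freeCoverπ (X : ModuleCat.{u} A) : X.freeCover ⟶ X :=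
  ofHom (Finsupp.linearCombination A Subtype.val)

lemma freeCoverπ_surjective (X : ModuleCat.{u} A) : Function.Surjective X.freeCoverπ.hom := by
  refine (span_range_eq_top_iff_surjective_finsuppLinearCombination A).1 ?_
  rw [Subtype.range_val]
  exact (exists_span_eq_top_and_finite (A := A) X).choose_spec.1

instance (X : ModuleCat.{u} A) : Projective X.freeCover :=
  inferInstanceAs (Projective (of A (X.generators →₀ A)))

instance (X : ModuleCat.{u} A) [Module.Finite A X] : Module.Finite A X.freeCover := by
  have : Finite X.generators :=
    ((exists_span_eq_top_and_finite (A := A) X).choose_spec.2 inferInstance).to_subtype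
  exact inferInstanceAs (Module.Finite A (X.generators →₀ A))

def kerCover {X₀ X₁ : ModuleCat.{u} A} (f : X₁ ⟶ X₀) :
    (of A (LinearMap.ker f.hom)).freeCover ⟶ X₁ :=
  freeCoverπ _ ≫ ofHom (LinearMap.ker f.hom).subtype

lemma kerCover_comp {X₀ X₁ : ModuleCat.{u} A} (f : X₁ ⟶ X₀) : kerCover f ≫ f = 0 := by
  ext x; exact (freeCoverπ _ x).2

lemma range_kerCover {X₀ X₁ : ModuleCat.{u} A} (f : X₁ ⟶ X₀) :
    LinearMap.range (kerCover f).hom = LinearMap.ker f.hom := by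
  change LinearMap.range
    ((LinearMap.ker f.hom).subtype ∘ₗ (freeCoverπ (of A (LinearMap.ker f.hom))).hom) = _
  exact (LinearMap.range_comp_of_range_eq_top _
    (LinearMap.range_eq_top.2 (freeCoverπ_surjective _))).trans (Submodule.range_subtype _)

def freeResolutionComplex (N : ModuleCat.{u} A) : ChainComplex (ModuleCat.{u} A) ℕ :=
  ChainComplex.mk' N.freeCover _ (kerCover N.freeCoverπ)
    fun f => ⟨_, kerCover f, kerCover_comp f⟩

variable (N : ModuleCat.{u} A)

lemma freeResolutionComplex_d_one_zero :
    (freeResolutionComplex N).d 1 0 = kerCover N.freeCoverπ :=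
  ChainComplex.mk'_d_1_0 ..

def freeResolutionComplexXIso (n : ℕ) :
    (freeResolutionComplex N).X (n + 2) ≅
      (of A (LinearMap.ker ((freeResolutionComplex N).d (n + 1) n).hom)).freeCover :=
  ChainComplex.mk'XIso ..

lemma freeResolutionComplex_d_succ (n : ℕ) :
    (freeResolutionComplex N).d (n + 2) (n + 1) =
      (freeResolutionComplexXIso N n).hom ≫ kerCover ((freeResolutionComplex N).d (n + 1) n) :=
  ChainComplex.mk'_d ..

lemma freeResolutionComplex_exactAt_succ (n : ℕ) : (freeResolutionComplex N).ExactAt (n + 1) := by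
  rw [HomologicalComplex.exactAt_iff' _ (n + 2) (n + 1) n (by simp) (by simp),
    ShortComplex.moduleCat_exact_iff_range_eq_ker]
  change LinearMap.range ((freeResolutionComplex N).d (n + 2) (n + 1)).hom = _
  rw [freeResolutionComplex_d_succ, hom_comp]
  exact (LinearMap.range_comp_of_range_eq_top _ (LinearMap.range_eq_top.2
    ((ModuleCat.epi_iff_surjective _).1 inferInstance))).trans (range_kerCover _)

instance (n : ℕ) : Projective ((freeResolutionComplex N).X n) := by
  rcases n with _ | _ | n
  · exact inferInstanceAs (Projective N.freeCover)
  · exact inferInstanceAs (Projective (freeCover _))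
  · exact Projective.of_iso (freeResolutionComplexXIso N n).symm inferInstance

def freeResolution : ProjectiveResolution N where
  complex := freeResolutionComplex N
  π := (ChainComplex.toSingle₀Equiv _ _).symm ⟨N.freeCoverπ, by
    rw [freeResolutionComplex_d_one_zero]; exact kerCover_comp _⟩
  quasiIso := ⟨fun n => by
    rcases n with _ | n
    · rw [ChainComplex.quasiIsoAt₀_iff, ShortComplex.quasiIso_iff_of_zeros']
      · constructor
        · rw [ShortComplex.moduleCat_exact_iff_range_eq_ker]
          exact range_kerCover N.freeCoverπ
        · exact (ModuleCat.epi_iff_surjective _).2 N.freeCoverπ_surjective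
      all_goals rfl
    · rw [quasiIsoAt_iff_exactAt']
      · exact freeResolutionComplex_exactAt_succ N n
      · exact ChainComplex.exactAt_succ_single_obj _ _⟩

section Noetherian

variable [IsNoetherianRing A]

instance finite_ker {X₀ X₁ : ModuleCat A} (f : X₁ ⟶ X₀) [Module.Finite A X₁] :
    Module.Finite A (of A (LinearMap.ker f.hom)) :=
  inferInstanceAs (Module.Finite A (LinearMap.ker f.hom))

theorem freeResolution_X_finite [Module.Finite A N] :
    ∀ n, Module.Finite A ((freeResolution N).complex.X n)
  | 0 => inferInstanceAs (Module.Finite A N.freeCover)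
  | 1 => inferInstanceAs (Module.Finite A (freeCover _))
  | n + 2 =>
    have : Module.Finite A ((freeResolutionComplex N).X (n + 1)) :=
      freeResolution_X_finite (n + 1)
    Module.Finite.equiv (freeResolutionComplexXIso N n).toLinearEquiv.symm

end Noetherian

end ModuleCat

namespace CategoryTheory.ShortComplex

variable {R : Type*} [Ring R] {S T : ShortComplex (ModuleCat R)}

lemma homologyMap_homologyπ_apply_eq_of_τ₂_iCycles {φ φ' : S ⟶ T} (c : S.cycles)
    (h : φ.τ₂ (S.iCycles c) = φ'.τ₂ (S.iCycles c)) :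
    homologyMap φ (S.homologyπ c) = homologyMap φ' (S.homologyπ c) := by
  have hc : cyclesMap φ c = cyclesMap φ' c := by
    apply (ModuleCat.mono_iff_injective T.iCycles).1 inferInstance
    rw [← ConcreteCategory.comp_apply, ← ConcreteCategory.comp_apply, cyclesMap_i, cyclesMap_i]
    exact h
  rw [← ConcreteCategory.comp_apply, ← ConcreteCategory.comp_apply, homologyπ_naturality,
    homologyπ_naturality, ConcreteCategory.comp_apply, ConcreteCategory.comp_apply, hc]

end CategoryTheory.ShortComplex

namespace CategoryTheory

variable {R : Type*} [Ring R] {C : Type*} [Category C] [Abelian C] [Linear R C]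

namespace ProjectiveResolution

variable {X : C} (P : ProjectiveResolution X)

-- The short complex `Hom(P_{n-1}, Y) ⟶ Hom(P_n, Y) ⟶ Hom(P_{n+1}, Y)` computing `Ext^n(X, Y)`.
variable (R) in
abbrev homShortComplex (n : ℕ) (Y : C) : ShortComplex (ModuleCat R) :=
  (((((linearYoneda R C).obj Y).rightOp.mapHomologicalComplex _).obj P.complex).sc n).unop

variable (R) in
def homShortComplexMap (n : ℕ) {Y Y' : C} (f : Y ⟶ Y') :
    P.homShortComplex R n Y ⟶ P.homShortComplex R n Y' :=
  ShortComplex.unopMap ((HomologicalComplex.shortComplexFunctor _ _ n).map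
    ((NatTrans.mapHomologicalComplex
      (NatTrans.rightOp ((linearYoneda R C).map f)) _).app P.complex))

lemma homShortComplexMap_add (n : ℕ) {Y Y' : C} (f g : Y ⟶ Y') :
    P.homShortComplexMap R n (f + g) = P.homShortComplexMap R n f + P.homShortComplexMap R n g := by
  ext : 1 <;> ext z <;> exact Preadditive.comp_add _ _ _ _ _ _

variable [EnoughProjectives C]

def extIso (n : ℕ) (Y : C) :
    ((Ext R C n).obj (op X)).obj Y ≅ (P.homShortComplex R n Y).homology :=
  (P.isoLeftDerivedObj ((linearYoneda R C).obj Y).rightOp n).unop.symm ≪≫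
    (P.homShortComplex R n Y).homologyOpIso.unop.symm

lemma ext_map_eq (n : ℕ) {Y Y' : C} (f : Y ⟶ Y') :
    ((Ext R C n).obj (op X)).map f =
      (P.extIso n Y).hom ≫ ShortComplex.homologyMap (P.homShortComplexMap R n f) ≫
        (P.extIso n Y').inv := by
  have hnat := ShortComplex.homologyOpIso_hom_naturality (P.homShortComplexMap R n f)
  have hhomology : (HomologicalComplex.homologyFunctor _ _ n).map ((NatTrans.mapHomologicalComplex
        (NatTrans.rightOp ((linearYoneda R C).map f)) _).app P.complex) =
      (P.homShortComplex R n Y').homologyOpIso.hom ≫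
        (ShortComplex.homologyMap (P.homShortComplexMap R n f)).op ≫
          (P.homShortComplex R n Y).homologyOpIso.inv := by
    change ShortComplex.homologyMap (ShortComplex.opMap (P.homShortComplexMap R n f)) = _
    rw [← cancel_mono (P.homShortComplex R n Y).homologyOpIso.hom, Category.assoc,
      Category.assoc, Iso.inv_hom_id, Category.comp_id, hnat]
  change ((NatTrans.leftDerived (NatTrans.rightOp ((linearYoneda R C).map f)) n).app X).unop = _
  rw [leftDerived_app_eq _ P, hhomology]
  rfl

theorem exists_hom_forall_ext_map_eq (n : ℕ) {Y : C} (x : ((Ext R C n).obj (op X)).obj Y) :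
    ∃ z : P.complex.X n ⟶ Y, ∀ {Y' : C} (f g : Y ⟶ Y'), z ≫ f = z ≫ g →
      ((Ext R C n).obj (op X)).map f x = ((Ext R C n).obj (op X)).map g x := by
  obtain ⟨c, hc⟩ := (ModuleCat.epi_iff_surjective (P.homShortComplex R n Y).homologyπ).1
    inferInstance ((P.extIso n Y).hom x)
  refine ⟨(P.homShortComplex R n Y).iCycles c, fun f g hfg => ?_⟩
  simp only [P.ext_map_eq, ConcreteCategory.comp_apply]
  -- `(P.homShortComplexMap R n f).τ₂` is postcomposition with `f`, so `hfg` is the hypothesis.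
  rw [← hc, ShortComplex.homologyMap_homologyπ_apply_eq_of_τ₂_iCycles
    (φ' := P.homShortComplexMap R n g) c hfg]

end ProjectiveResolution

instance ext_obj_additive [EnoughProjectives C] (n : ℕ) (X : C) : ((Ext R C n).obj (op X)).Additive where
  map_add {Y Y' f g} := by
    simp only [(projectiveResolution X).ext_map_eq, ProjectiveResolution.homShortComplexMap_add,
      ShortComplex.homologyMap_add, Preadditive.add_comp, Preadditive.comp_add]

end CategoryTheory

end

open DirectSum in
theorem ext_directSum_general (A : Type) [Ring A] [IsNoetherianRing A]
    (N : ModuleCat.{0} A) [Module.Finite A N]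
    {I : Type} [DecidableEq I] (M : I → ModuleCat.{0} A) (i : ℕ) :
    Function.Bijective
      (DirectSum.toAddMonoid
        (fun α : I =>
          (AddMonoidHom.mk'
            (fun x => (((Ext ℤ (ModuleCat.{0} A) i).obj (Opposite.op N)).map
              (show M α ⟶ ModuleCat.of A (⨁ α : I, (M α : Type)) from
                ModuleCat.ofHom (DirectSum.lof A I (fun α => (M α : Type)) α))) x)
            (fun x y => map_add _ x y) :
            extType A i N (M α) →+
              extType A i N (ModuleCat.of A (⨁ α : I, (M α : Type)))))) := by
  have := ModuleCat.freeResolution_X_finite N i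
  refine Functor.toAddMonoid_map_lof_bijective M _ fun x => ?_
  obtain ⟨z, hz⟩ := (ModuleCat.freeResolution N).exists_hom_forall_ext_map_eq i x
  obtain ⟨s, hs⟩ := exists_finset_sum_lof_component_comp z.hom
  exact ⟨s, (hz _ (𝟙 _) (ModuleCat.hom_ext hs)).trans
    (by rw [CategoryTheory.Functor.map_id, ModuleCat.id_apply])⟩

open DirectSum in
/-- Over a left noetherian ring `A`, if `N` is a finitely generated left `A`-module and
`(M α)` is a family of left `A`-modules of uniformly bounded injective dimension, then for
every `i ≥ 0` the natural map `⊕ Ext^i(N, M α) → Ext^i(N, ⊕ M α)` is an isomorphism. -/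
theorem ext_directSum (A : Type) [Ring A] [IsNoetherianRing A]
    (N : ModuleCat.{0} A) [Module.Finite A N]
    {I : Type} [DecidableEq I] (M : I → ModuleCat.{0} A) (n : ℕ)
    (h : ∀ α : I, injDim A (M α) ≤ (n : ℕ∞)) (i : ℕ) :
    Function.Bijective
      (DirectSum.toAddMonoid
        (fun α : I =>
          (AddMonoidHom.mk'
            (fun x => (((Ext ℤ (ModuleCat.{0} A) i).obj (Opposite.op N)).map
              (show M α ⟶ ModuleCat.of A (⨁ α : I, (M α : Type)) from
                ModuleCat.ofHom (DirectSum.lof A I (fun α => (M α : Type)) α))) x)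
            (fun x y => map_add _ x y) :
            extType A i N (M α) →+
              extType A i N (ModuleCat.of A (⨁ α : I, (M α : Type)))))) :=
  ext_directSum_general A N M i
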